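/- arXiv:2601.01654 — 2 statements merged into one kernel-verified Lean document; each statement's English description precedes it below -/
import Mathlib

section
/- Let p be an odd prime and k = F_p. Let B be the 4×4 matrix over k[[q]] with B[2,1] = 1, B[3,2] = ∑_{d≥1} q^d, B[4,3] = 1 and zeros elsewhere, and let ∇ = t·(q·d/dq) + B act on (k[[q]])^4 ⊗ k[t] with t a central variable. Then the p-curvature ψ = ∇^p − t^(p-1)∇ equals the matrix with entries ψ[2,1] = −t^(p-1), ψ[3,1] = t^(p-2)·∑_{d≥1} d^(p-2) q^d, ψ[3,2] = −t^(p-1)·∑_{d≥1} q^(pd), ψ[4,1] = −t^(p-3)·∑_{d≥1} 2·d^(p-3) q^d, ψ[4,2] = −t^(p-2)·∑_{d≥1} d^(p-2) q^d, ψ[4,3] = −t^(p-1), and all other entries zero. -/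
/-!
Write `T = t·q d/dq`, so that `∇ = T + B` satisfies the Leibniz rule `∇ (g v) = g ∇ v + T(g) v`.
Iterating, `∇^p (g v) = ∑ (p choose i) T^i(g) ∇^(p-i) v`, and in characteristic `p` only the
terms `i = 0, p` survive. Since `θ = q d/dq` acts on `q^d` by `d` and `d^p = d` in `𝔽_p`, we get
`T^p = t^(p-1) T`, hence `ψ = ∇^p - t^(p-1) ∇` is linear over `𝔽_p[[q]][t]` and is determined by
its values on the standard basis `e₀, …, e₃`. On these, `∇` acts by `e₀ ↦ e₁`, `e₁ ↦ f e₂`,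
`e₂ ↦ e₃`, `e₃ ↦ 0` with `f = ∑_{d ≥ 1} q^d`, so that
`∇^(n+2) e₁ = T^(n+1)(f) e₂ + (n+1) T^n(f) e₃`; the columns of `ψ` follow with `n = p - 2, p - 3`,
using `T^k(f) = t^k ∑ d^k q^d` and Fermat's little theorem for `f - θ^(p-1) f = ∑ q^(pd)`.
-/

open Finset Polynomial Matrix

section PCurvature
variable {R M : Type*} [CommRing R] [AddCommGroup M] [Module R M] (T : R → R)
  (nabla : AddMonoid.End M) (hnabla : ∀ (g : R) (v : M), nabla (g • v) = g • nabla v + T g • v)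

include hnabla

theorem AddMonoid.End.pow_apply_smul (n : ℕ) (g : R) (v : M) :
    (nabla ^ n) (g • v) =
      ∑ ij ∈ antidiagonal n, n.choose ij.1 • (T^[ij.1] g • (nabla ^ ij.2) v) := by
  induction n with
  | zero => simp
  | succ n ih =>
    rw [sum_antidiagonal_choose_succ_nsmul (fun i j => T^[i] g • (nabla ^ j) v) n]
    simp only [pow_succ', AddMonoid.End.coe_mul, Function.comp_apply, ih, map_sum, map_nsmul,
      hnabla, nsmul_add, sum_add_distrib, Function.iterate_succ_apply']
    refine congrArg₂ (· + ·) rfl (sum_congr rfl fun ⟨i, j⟩ hij => ?_)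
    rw [n.choose_symm_of_eq_add (mem_antidiagonal.1 hij).symm]

theorem AddMonoid.End.pow_prime_apply_smul (p : ℕ) [hp : Fact p.Prime] [CharP R p] (g : R)
    (v : M) : (nabla ^ p) (g • v) = g • (nabla ^ p) v + T^[p] g • v := by
  rw [pow_apply_smul T nabla hnabla, sum_eq_add_of_mem (0, p) (p, 0) (by simp) (by simp)
    (by simp [hp.out.ne_zero])]
  · simp
  rintro ⟨i, j⟩ hij hne
  simp only [HasAntidiagonal.mem_antidiagonal] at hij
  have hi : i ≠ 0 := by rintro rfl; simp_all
  have hj : j ≠ 0 := by rintro rfl; simp_all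
  obtain ⟨m, hm⟩ := hp.out.dvd_choose_self hi (by omega)
  dsimp only
  rw [hm, ← Nat.cast_smul_eq_nsmul R, Nat.cast_mul, CharP.cast_eq_zero, zero_mul, zero_smul]

def pCurvature (p : ℕ) [Fact p.Prime] [CharP R p] (c : R) (hT : ∀ g, T^[p] g = c * T g) :
    M →ₗ[R] M where
  toFun v := (nabla ^ p) v - c • nabla v
  map_add' v w := by simp only [map_add, smul_add]; abel
  map_smul' g v := by
    simp only [AddMonoid.End.pow_prime_apply_smul T nabla hnabla, hnabla, hT, RingHom.id_apply]
    module

theorem pCurvature_apply (p : ℕ) [Fact p.Prime] [CharP R p] (c : R)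
    (hT : ∀ g, T^[p] g = c * T g) (v : M) :
    pCurvature T nabla hnabla p c hT v = (nabla ^ p) v - c • nabla v :=
  rfl

end PCurvature

section Chain
variable {R M 𝓕 : Type*} [CommRing R] [AddCommGroup M] [Module R M] [FunLike 𝓕 R R]
  [AddMonoidHomClass 𝓕 R R] (T : 𝓕)
  (nabla : AddMonoid.End M) (hnabla : ∀ (g : R) (v : M), nabla (g • v) = g • nabla v + T g • v)
  {e₀ e₁ e₂ e₃ : M} (F : R) (h₀ : nabla e₀ = e₁) (h₁ : nabla e₁ = F • e₂) (h₂ : nabla e₂ = e₃)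
  (h₃ : nabla e₃ = 0)
include hnabla h₁ h₂ h₃

theorem AddMonoid.End.pow_add_two_apply_of_chain (n : ℕ) :
    (nabla ^ (n + 2)) e₁ = T^[n + 1] F • e₂ + ((n + 1) • T^[n] F) • e₃ := by
  induction n with
  | zero =>
    rw [pow_two, AddMonoid.End.coe_mul, Function.comp_apply, h₁, hnabla, h₂]
    simp [add_comm]
  | succ n ih =>
    rw [pow_succ', AddMonoid.End.coe_mul, Function.comp_apply, ih, map_add, hnabla, hnabla, h₂,
      h₃, map_nsmul, Function.iterate_succ_apply' _ (n + 1), Function.iterate_succ_apply' _ n]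
    module

include h₀ in
theorem pCurvature_of_chain (p : ℕ) [Fact p.Prime] [CharP R p] (hp : 3 ≤ p) (c : R)
    (hT : ∀ g, T^[p] g = c * T g) :
    pCurvature T nabla hnabla p c hT e₀ =
        -c • e₁ + T^[p - 2] F • e₂ + ((p - 2) • T^[p - 3] F) • e₃ ∧
      pCurvature T nabla hnabla p c hT e₁ =
        (T^[p - 1] F - c * F) • e₂ + ((p - 1) • T^[p - 2] F) • e₃ ∧
      pCurvature T nabla hnabla p c hT e₂ = -c • e₃ ∧
      pCurvature T nabla hnabla p c hT e₃ = 0 := by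
  have chain := AddMonoid.End.pow_add_two_apply_of_chain T nabla hnabla F h₁ h₂ h₃
  have pow_succ_apply (k : ℕ) (v : M) : (nabla ^ (k + 1)) v = (nabla ^ k) (nabla v) := by
    rw [pow_succ, AddMonoid.End.coe_mul, Function.comp_apply]
  obtain ⟨n, rfl⟩ : ∃ n, p = n + 3 := ⟨p - 3, by omega⟩
  simp only [pCurvature_apply, show n + 3 - 1 = n + 2 by omega, show n + 3 - 2 = n + 1 by omega,
    Nat.add_sub_cancel]
  refine ⟨?_, ?_, ?_, ?_⟩
  · rw [pow_succ_apply, h₀, chain]; module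
  · rw [chain, h₁]; module
  · rw [pow_succ_apply, h₂, pow_succ_apply, h₃, map_zero]; module
  · rw [pow_succ_apply, h₃, map_zero]; simp

end Chain

section MatrixConnection
variable {S R ι : Type*} [CommRing S] [CommRing R] [Algebra S R] [Fintype ι]
  (T : Derivation S R R) (A : Matrix ι ι R)

def Derivation.matrixConnection : AddMonoid.End (ι → R) where
  toFun v := (fun i => T (v i)) + A *ᵥ v
  map_zero' := by ext; simp
  map_add' v w := by ext; simp only [Pi.add_apply, map_add, Matrix.mulVec_add]; abel

theorem Derivation.matrixConnection_apply (v : ι → R) (i : ι) :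
    T.matrixConnection A v i = T (v i) + (A *ᵥ v) i :=
  rfl

theorem Derivation.matrixConnection_smul (g : R) (v : ι → R) :
    T.matrixConnection A (g • v) = g • T.matrixConnection A v + T g • v := by
  ext i
  simp only [matrixConnection_apply, Pi.smul_apply, smul_eq_mul, Matrix.mulVec_smul, leibniz,
    Pi.add_apply]
  ring

theorem Derivation.matrixConnection_single [DecidableEq ι] (j : ι) :
    T.matrixConnection A (Pi.single j 1) = fun i => A i j := by
  ext i
  simp [matrixConnection_apply, Pi.apply_single (fun _ => T) (fun _ => T.map_zero)]

theorem Derivation.toMatrix'_pCurvature_matrixConnection (p : ℕ) [Fact p.Prime] [CharP R p]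
    (hp : 3 ≤ p) (F c : R) (hT : ∀ g, T^[p] g = c * T g) :
    LinearMap.toMatrix' (pCurvature T
      (T.matrixConnection !![0, 0, 0, 0; 1, 0, 0, 0; 0, F, 0, 0; 0, 0, 1, 0])
      (T.matrixConnection_smul _) p c hT) =
      !![0, 0, 0, 0;
        -c, 0, 0, 0;
        T^[p - 2] F, T^[p - 1] F - c * F, 0, 0;
        (p - 2) • T^[p - 3] F, (p - 1) • T^[p - 2] F, -c, 0] := by
  have h := T.matrixConnection_single !![0, 0, 0, 0; 1, 0, 0, 0; 0, F, 0, 0; 0, 0, 1, 0]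
  obtain ⟨col₀, col₁, col₂, col₃⟩ := pCurvature_of_chain T
    (T.matrixConnection !![0, 0, 0, 0; 1, 0, 0, 0; 0, F, 0, 0; 0, 0, 1, 0])
    (T.matrixConnection_smul _) F
    (e₀ := Pi.single 0 1) (e₁ := Pi.single 1 1) (e₂ := Pi.single 2 1) (e₃ := Pi.single 3 1)
    (by rw [h]; ext i; fin_cases i <;> simp) (by rw [h]; ext i; fin_cases i <;> simp)
    (by rw [h]; ext i; fin_cases i <;> simp) (by rw [h]; ext i; fin_cases i <;> simp) p hp c hT
  ext i j
  rw [LinearMap.toMatrix'_apply]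
  fin_cases j <;> simp only [Fin.zero_eta, Fin.mk_one, Fin.reduceFinMk, col₀, col₁, col₂, col₃] <;>
    fin_cases i <;> simp

end MatrixConnection

section Coeffwise
variable {A B : Type*} [CommRing A] [CommRing B] [Algebra A B]

noncomputable def Derivation.coeffwise (δ : Derivation A B B) : Derivation A B[X] B[X] :=
  PolynomialModule.equivPolynomialSelf.compDer δ.mapCoeffs

variable (δ : Derivation A B B)

@[simp]
theorem Derivation.coeff_coeffwise (u : B[X]) (n : ℕ) :
    (δ.coeffwise u).coeff n = δ (u.coeff n) :=
  rfl

@[simp]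
theorem Derivation.coeffwise_C (b : B) : δ.coeffwise (C b) = C (δ b) := by
  ext n; rw [coeff_coeffwise, coeff_C, coeff_C]; split_ifs <;> simp

@[simp]
theorem Derivation.coeffwise_X : δ.coeffwise (X : B[X]) = 0 := by
  ext n; rw [coeff_coeffwise, coeff_X, coeff_zero]; split_ifs <;> simp

theorem Derivation.coeff_iterate_coeffwise (k : ℕ) (u : B[X]) (n : ℕ) :
    (δ.coeffwise^[k] u).coeff n = δ^[k] (u.coeff n) := by
  induction k generalizing u with
  | zero => rfl
  | succ k ih => simp only [Function.iterate_succ_apply, ih, coeff_coeffwise]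

theorem Derivation.iterate_coeffwise_C (k : ℕ) (b : B) :
    δ.coeffwise^[k] (C b) = C (δ^[k] b) := by
  induction k with
  | zero => rfl
  | succ k ih => rw [Function.iterate_succ_apply', ih, coeffwise_C, Function.iterate_succ_apply']

theorem Derivation.iterate_X_smul_coeffwise (k : ℕ) (u : B[X]) :
    ((X : B[X]) • δ.coeffwise)^[k] u = X ^ k * δ.coeffwise^[k] u := by
  induction k generalizing u with
  | zero => simp
  | succ k ih =>
    rw [Function.iterate_succ_apply', ih, Function.iterate_succ_apply']
    simp only [Derivation.coe_smul, Pi.smul_apply, smul_eq_mul, Derivation.leibniz,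
      Derivation.leibniz_pow, coeffwise_X]
    ring

theorem Derivation.iterate_X_smul_coeffwise_C (k : ℕ) (b : B) :
    ((X : B[X]) • δ.coeffwise)^[k] (C b) = X ^ k * C (δ^[k] b) := by
  rw [iterate_X_smul_coeffwise, iterate_coeffwise_C]

theorem Derivation.iterate_X_smul_coeffwise_of_iterate_eq {k : ℕ} (hk : k ≠ 0)
    (hδ : δ^[k] = δ) (u : B[X]) :
    ((X : B[X]) • δ.coeffwise)^[k] u = X ^ (k - 1) * ((X : B[X]) • δ.coeffwise) u := by
  have hδk : δ.coeffwise^[k] u = δ.coeffwise u := by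
    ext n; rw [coeff_iterate_coeffwise, hδ, coeff_coeffwise]
  rw [iterate_X_smul_coeffwise, hδk, Derivation.smul_apply, smul_eq_mul, ← mul_assoc, ← pow_succ,
    Nat.sub_add_cancel (Nat.one_le_iff_ne_zero.mpr hk)]

end Coeffwise

section Euler
variable (K : Type*) [CommRing K]

noncomputable def PowerSeries.eulerDeriv : Derivation K (PowerSeries K) (PowerSeries K) :=
  (PowerSeries.X : PowerSeries K) • PowerSeries.derivative K

theorem PowerSeries.coeff_eulerDeriv (g : PowerSeries K) (n : ℕ) :
    coeff n (eulerDeriv K g) = n * coeff n g := by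
  rcases n with _ | n
  · simp [eulerDeriv]
  · simp [eulerDeriv, coeff_succ_X_mul, coeff_derivative, mul_comm]

theorem PowerSeries.coeff_iterate_eulerDeriv (k : ℕ) (g : PowerSeries K) (n : ℕ) :
    coeff n ((eulerDeriv K)^[k] g) = n ^ k * coeff n g := by
  induction k with
  | zero => simp
  | succ k ih => rw [Function.iterate_succ_apply', coeff_eulerDeriv, ih, pow_succ']; ring

theorem PowerSeries.iterate_eulerDeriv_char (p : ℕ) [Fact p.Prime] [CharP K p] :
    (eulerDeriv K)^[p] = eulerDeriv K := by
  ext g n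
  rw [coeff_iterate_eulerDeriv, coeff_eulerDeriv, ← frobenius_def, map_natCast]

theorem PowerSeries.iterate_eulerDeriv_mk_ite (k : ℕ) :
    (eulerDeriv K)^[k] (mk fun d => if d = 0 then 0 else 1) =
      mk fun d => if d = 0 then 0 else (d : K) ^ k := by
  ext d; rw [coeff_iterate_eulerDeriv]; by_cases hd : d = 0 <;> simp [hd]

end Euler

theorem PowerSeries.mk_ite_dvd_eq_sub_iterate_eulerDeriv (p : ℕ) [Fact p.Prime] :
    (mk fun n => if n ≠ 0 ∧ p ∣ n then (1 : ZMod p) else 0) =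
      (mk fun d => if d = 0 then 0 else 1) -
        (eulerDeriv (ZMod p))^[p - 1] (mk fun d => if d = 0 then 0 else 1) := by
  ext d
  rw [map_sub, coeff_iterate_eulerDeriv]
  by_cases hd : (d : ZMod p) = 0
  · have hpd : p ∣ d := (ZMod.natCast_eq_zero_iff d p).mp hd
    simp [hd, hpd, zero_pow (Nat.sub_ne_zero_of_lt (Fact.out : p.Prime).one_lt)]
  · have hpd : ¬p ∣ d := mt (ZMod.natCast_eq_zero_iff d p).mpr hd
    have hd0 : d ≠ 0 := by rintro rfl; simp at hd
    simp [hpd, hd0, ZMod.pow_card_sub_one_eq_one hd]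

theorem CharP.cast_sub_eq_neg {R : Type*} [Ring R] (p : ℕ) [CharP R p] {k : ℕ} (hk : k ≤ p) :
    ((p - k : ℕ) : R) = -k := by
  rw [Nat.cast_sub hk, CharP.cast_eq_zero, zero_sub]

/-- Explicit `p`-curvature of the quantum connection of local `P^1` (odd prime `p`):
with `∇ = t·(q d/dq) + B` acting on `(F_p[[q]][t])^4`, where `B[2,1] = 1`,
`B[3,2] = ∑_{d≥1} q^d`, `B[4,3] = 1` (1-based), the `p`-curvature `ψ = ∇^p − t^{p-1}∇`
is given by the explicit matrix `Ψ` with entries `Ψ[2,1] = −t^{p-1}`,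
`Ψ[3,1] = t^{p-2}∑ d^{p-2}q^d`, `Ψ[3,2] = −t^{p-1}∑ q^{pd}`,
`Ψ[4,1] = −t^{p-3}∑ 2d^{p-3}q^d`, `Ψ[4,2] = −t^{p-2}∑ d^{p-2}q^d`, `Ψ[4,3] = −t^{p-1}`. -/
theorem stmt_10 (p : ℕ) (hp : p.Prime) (hodd : Odd p)
    (D : PowerSeries (ZMod p) → PowerSeries (ZMod p))
    (hD : ∀ (g : PowerSeries (ZMod p)) (n : ℕ),
      PowerSeries.coeff (R := ZMod p) n (D g) = (n : ZMod p) * PowerSeries.coeff (R := ZMod p) n g)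
    (Dp : Polynomial (PowerSeries (ZMod p)) → Polynomial (PowerSeries (ZMod p)))
    (hDp : ∀ (g : Polynomial (PowerSeries (ZMod p))) (n : ℕ),
      (Dp g).coeff n = D (g.coeff n))
    (B : Matrix (Fin 4) (Fin 4) (PowerSeries (ZMod p)))
    (hB : B = Matrix.of
      ![![0,0,0,0],
        ![1,0,0,0],
        ![0, PowerSeries.mk (fun d => if d = 0 then (0 : ZMod p) else 1), 0, 0],
        ![0,0,1,0]])
    (nabla : (Fin 4 → Polynomial (PowerSeries (ZMod p)))
      → Fin 4 → Polynomial (PowerSeries (ZMod p)))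
    (hnabla : ∀ v i, nabla v i = Polynomial.X * Dp (v i)
      + ∑ j, Polynomial.C (B i j) * v j)
    (Ψ : Matrix (Fin 4) (Fin 4) (Polynomial (PowerSeries (ZMod p))))
    (hΨ : Ψ = Matrix.of
      ![![0,0,0,0],
        ![-(Polynomial.X ^ (p-1)), 0, 0, 0],
        ![Polynomial.X ^ (p-2) * Polynomial.C
            (PowerSeries.mk fun d => if d = 0 then (0 : ZMod p) else (d : ZMod p) ^ (p-2)),
          -(Polynomial.X ^ (p-1)) * Polynomial.C
            (PowerSeries.mk fun n => if n ≠ 0 ∧ p ∣ n then (1 : ZMod p) else 0), 0, 0],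
        ![-(Polynomial.X ^ (p-3)) * Polynomial.C
            (PowerSeries.mk fun d => if d = 0 then (0 : ZMod p) else 2 * (d : ZMod p) ^ (p-3)),
          -(Polynomial.X ^ (p-2)) * Polynomial.C
            (PowerSeries.mk fun d => if d = 0 then (0 : ZMod p) else (d : ZMod p) ^ (p-2)),
          -(Polynomial.X ^ (p-1)), 0]]) :
    ∀ (v : Fin 4 → Polynomial (PowerSeries (ZMod p))) (i : Fin 4),
      nabla^[p] v i - Polynomial.X ^ (p-1) * nabla v i = ∑ j, Ψ i j * v j := by
  have := Fact.mk hp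
  have : CharP (PowerSeries (ZMod p)) p :=
    charP_of_injective_algebraMap (algebraMap (ZMod p) _).injective p
  set θ := PowerSeries.eulerDeriv (ZMod p)
  set T := (X : (PowerSeries (ZMod p))[X]) • θ.coeffwise with hT
  set f : PowerSeries (ZMod p) := PowerSeries.mk fun d => if d = 0 then 0 else 1
  have hDp' : Dp = θ.coeffwise := funext fun g => Polynomial.ext fun n => by
    rw [hDp, Derivation.coeff_coeffwise]
    exact PowerSeries.ext fun m => by rw [hD, PowerSeries.coeff_eulerDeriv]
  have hnabla' :
      nabla = T.matrixConnection !![0, 0, 0, 0; 1, 0, 0, 0; 0, C f, 0, 0; 0, 0, 1, 0] := by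
    funext v i
    rw [hnabla, Derivation.matrixConnection_apply, hDp', hB, hT, Derivation.smul_apply,
      smul_eq_mul]
    fin_cases i <;> simp [mulVec, dotProduct, Fin.sum_univ_four]
  have hΨ' : Ψ = !![0, 0, 0, 0;
        -X ^ (p - 1), 0, 0, 0;
        T^[p - 2] (C f), T^[p - 1] (C f) - X ^ (p - 1) * C f, 0, 0;
        (p - 2) • T^[p - 3] (C f), (p - 1) • T^[p - 2] (C f), -X ^ (p - 1), 0] := by
    have htwo : (PowerSeries.mk fun d => if d = 0 then (0 : ZMod p) else 2 * (d : ZMod p) ^ (p - 3))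
        = θ^[p - 3] f + θ^[p - 3] f := by
      rw [PowerSeries.iterate_eulerDeriv_mk_ite]; ext d; by_cases hd : d = 0 <;> simp [hd, two_mul]
    simp only [hΨ, hT, nsmul_eq_mul, CharP.cast_sub_eq_neg p (hp.two_le.trans' one_le_two),
      CharP.cast_sub_eq_neg p hp.two_le, θ.iterate_X_smul_coeffwise_C,
      PowerSeries.mk_ite_dvd_eq_sub_iterate_eulerDeriv, htwo,
      ← PowerSeries.iterate_eulerDeriv_mk_ite]
    refine Matrix.ext fun i j => ?_
    fin_cases i <;> fin_cases j <;> simp <;> ring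
  have hTp (g : (PowerSeries (ZMod p))[X]) : T^[p] g = X ^ (p - 1) * T g :=
    θ.iterate_X_smul_coeffwise_of_iterate_eq hp.ne_zero (PowerSeries.iterate_eulerDeriv_char _ p) g
  intro v i
  change _ = (Ψ *ᵥ v) i
  rw [hΨ', ← T.toMatrix'_pCurvature_matrixConnection p (hp.odd_iff.mp hodd) (C f) _ hTp,
    LinearMap.toMatrix'_mulVec, pCurvature_apply, hnabla', AddMonoid.End.coe_pow]
  rfl
end

section
/- Let k be a field of characteristic p ≥ 5, A = k[[q]], ∂ = q d/dq, f = ∑_{d≥1} q^d ∈ A. Define C_1, C_2, C_3 as 4×4 matrices over A by: C_1 with entries C_1[2,1] = −1, C_1[3,2] = −∑_{d≥1} q^{pd}, C_1[4,3] = −1, zeros elsewhere; C_2 with entries C_2[3,1] = ∑_{d≥1} d^(p-2) q^d, C_2[4,2] = −∑_{d≥1} d^(p-2) q^d, zeros elsewhere; C_3 with entry C_3[4,1] = −2·∑_{d≥1} d^(p-3) q^d, zeros elsewhere. Let B be the matrix with B[2,1] = B[4,3] = 1, B[3,2] = f, zeros elsewhere. Then ∂C_2 = [C_1, B], ∂C_3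 = [C_2, B], and [C_3, B] = 0. -/
/-!
With `∂ = q d/dq`, `∂ (∑ d^m q^d) = ∑ d^(m+1) q^d`, and by Fermat's little theorem
`∑ d^(p-1) q^d = f - ∑ q^(pd)` in characteristic `p`. The matrices are sparse and strictly lower
triangular, so the commutators with `B` are read off from `E_ij E_jl = E_il`:
`[C₁(s), B(f)] = C₂(f - s)`, `[C₂(a), B(f)] = C₃(a)` and `[C₃(c), B(f)] = 0`.
-/

open PowerSeries

theorem natCast_pow_pred_eq_one {k : Type*} [Ring k] {p : ℕ} [Fact p.Prime] [CharP k p] {n : ℕ}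
    (hn : ¬ p ∣ n) : (n : k) ^ (p - 1) = 1 := by
  have hn' : (n : ZMod p) ≠ 0 := by rwa [Ne, ZMod.natCast_eq_zero_iff]
  simpa using congrArg (ZMod.castHom (dvd_refl p) k) (ZMod.pow_card_sub_one_eq_one hn')

namespace PowerSeries

variable (k : Type*) [CommRing k]

noncomputable def qDeriv : Derivation k k⟦X⟧ k⟦X⟧ := (X : k⟦X⟧) • derivative k

variable {k}

theorem coeff_qDeriv (g : k⟦X⟧) (n : ℕ) : coeff n (qDeriv k g) = n * coeff n g := by
  rcases n with _ | n
  · simp [qDeriv]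
  · rw [qDeriv, Derivation.smul_apply, smul_eq_mul, coeff_succ_X_mul, coeff_derivative]
    push_cast
    ring

theorem eq_qDeriv_of_coeff {D : k⟦X⟧ → k⟦X⟧} (hD : ∀ g n, coeff n (D g) = n * coeff n g) :
    D = qDeriv k := by
  funext g
  ext n
  rw [hD, coeff_qDeriv]

theorem qDeriv_mk_pow (m : ℕ) :
    qDeriv k (mk fun d => if d = 0 then 0 else (d : k) ^ m)
      = mk fun d => if d = 0 then 0 else (d : k) ^ (m + 1) := by
  ext n
  rw [coeff_qDeriv, coeff_mk, coeff_mk]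
  split_ifs <;> ring

theorem mk_pow_pred_eq_sub {p : ℕ} [Fact p.Prime] [CharP k p] :
    (mk fun d => if d = 0 then 0 else (d : k) ^ (p - 1))
      = (mk fun d => if d = 0 then (0 : k) else 1) - mk fun d => if d ≠ 0 ∧ p ∣ d then 1 else 0 := by
  ext n
  rw [map_sub, coeff_mk, coeff_mk, coeff_mk]
  by_cases hn : n = 0
  · simp [hn]
  by_cases hpn : p ∣ n
  · have hp1 : p - 1 ≠ 0 := (Nat.sub_pos_of_lt (Fact.out : p.Prime).one_lt).ne'
    simp [hn, hpn, (CharP.cast_eq_zero_iff k p n).2 hpn, hp1]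
  · simp [hn, hpn, natCast_pow_pred_eq_one hpn]

end PowerSeries

namespace LocalP1

variable {R : Type*} [Ring R]

def B (f : R) : Matrix (Fin 4) (Fin 4) R := .of ![![0,0,0,0], ![1,0,0,0], ![0,f,0,0], ![0,0,1,0]]

def C₁ (s : R) : Matrix (Fin 4) (Fin 4) R := .of ![![0,0,0,0], ![-1,0,0,0], ![0,-s,0,0], ![0,0,-1,0]]

def C₂ (a : R) : Matrix (Fin 4) (Fin 4) R := .of ![![0,0,0,0], ![0,0,0,0], ![a,0,0,0], ![0,-a,0,0]]

def C₃ (c : R) : Matrix (Fin 4) (Fin 4) R := .of ![![0,0,0,0], ![0,0,0,0], ![0,0,0,0], ![-(2*c),0,0,0]]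

theorem C₁_mul_B_sub (s f : R) : C₁ s * B f - B f * C₁ s = C₂ (f - s) := by
  ext i j
  simp only [Matrix.sub_apply, Matrix.mul_apply, Fin.sum_univ_four]
  fin_cases i <;> fin_cases j <;> simp [B, C₁, C₂, neg_add_eq_sub]

theorem C₂_mul_B_sub (a f : R) : C₂ a * B f - B f * C₂ a = C₃ a := by
  ext i j
  simp only [Matrix.sub_apply, Matrix.mul_apply, Fin.sum_univ_four]
  fin_cases i <;> fin_cases j <;> simp [B, C₂, C₃, two_mul, sub_eq_add_neg]

theorem C₃_mul_B_sub (c f : R) : C₃ c * B f - B f * C₃ c = 0 := by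
  ext i j
  simp only [Matrix.sub_apply, Matrix.mul_apply, Fin.sum_univ_four]
  fin_cases i <;> fin_cases j <;> simp [B, C₃]

variable {S F : Type*} [Ring S] [FunLike F R S] [AddMonoidHomClass F R S]

theorem map_C₂ (φ : F) (a : R) : (C₂ a).map φ = C₂ (φ a) := by
  ext i j
  fin_cases i <;> fin_cases j <;> simp [C₂]

theorem map_C₃ (φ : F) (c : R) : (C₃ c).map φ = C₃ (φ c) := by
  ext i j
  fin_cases i <;> fin_cases j <;> simp [C₃, two_mul]

end LocalP1

open LocalP1 in
/-- Covariant constancy equations for the explicit local `P^1` `p`-curvature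
coefficients (`k` of characteristic `p ≥ 5`, `∂ = q d/dq` acting entrywise):
`∂C₂ = [C₁, B]`, `∂C₃ = [C₂, B]`, and `[C₃, B] = 0`, for the explicit 4×4 matrices
`C₁, C₂, C₃, B` over `k[[q]]` given in the local `P^1` computation. -/
theorem stmt_18 (p : ℕ) (hp : p.Prime) (hp5 : 5 ≤ p) (k : Type*) [Field k] [CharP k p]
    (D : PowerSeries k → PowerSeries k)
    (hD : ∀ (g : PowerSeries k) (n : ℕ),
      PowerSeries.coeff n (D g) = (n : k) * PowerSeries.coeff n g)
    (f S2 S3 Sp : PowerSeries k)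
    (hf : f = PowerSeries.mk fun d => if d = 0 then (0 : k) else 1)
    (hS2 : S2 = PowerSeries.mk fun d => if d = 0 then (0 : k) else (d : k) ^ (p - 2))
    (hS3 : S3 = PowerSeries.mk fun d => if d = 0 then (0 : k) else (d : k) ^ (p - 3))
    (hSp : Sp = PowerSeries.mk fun n => if n ≠ 0 ∧ p ∣ n then (1 : k) else 0)
    (B C1 C2 C3 : Matrix (Fin 4) (Fin 4) (PowerSeries k))
    (hB : B = Matrix.of ![![0,0,0,0], ![1,0,0,0], ![0,f,0,0], ![0,0,1,0]])
    (hC1 : C1 = Matrix.of ![![0,0,0,0], ![-1,0,0,0], ![0,-Sp,0,0], ![0,0,-1,0]])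
    (hC2 : C2 = Matrix.of ![![0,0,0,0], ![0,0,0,0], ![S2,0,0,0], ![0,-S2,0,0]])
    (hC3 : C3 = Matrix.of ![![0,0,0,0], ![0,0,0,0], ![0,0,0,0], ![-(2*S3),0,0,0]]) :
    (∀ i j, D (C2 i j) = (C1 * B - B * C1) i j)
    ∧ (∀ i j, D (C3 i j) = (C2 * B - B * C2) i j)
    ∧ C3 * B - B * C3 = 0 := by
  have : Fact p.Prime := ⟨hp⟩
  obtain rfl := eq_qDeriv_of_coeff hD
  obtain rfl : B = LocalP1.B f := hB
  obtain rfl : C1 = C₁ Sp := hC1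
  obtain rfl : C2 = C₂ S2 := hC2
  obtain rfl : C3 = C₃ S3 := hC3
  have hS2' : qDeriv k S2 = f - Sp := by
    rw [hS2, qDeriv_mk_pow, show p - 2 + 1 = p - 1 by omega, mk_pow_pred_eq_sub, hf, hSp]
  have hS3' : qDeriv k S3 = S2 := by
    rw [hS3, qDeriv_mk_pow, show p - 3 + 1 = p - 2 by omega, hS2]
  refine ⟨fun i j => ?_, fun i j => ?_, C₃_mul_B_sub S3 f⟩
  · rw [C₁_mul_B_sub, ← hS2', ← map_C₂]
    rfl
  · rw [C₂_mul_B_sub, ← hS3', ← map_C₃]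
    rfl
end
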